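/- Let S be a nontrivial proper subsemigroup of ℚ⁺ with 1 ∈ S, and pick d ∈ ℕ with 1/d ∉ S. Let A be the 3 × 2 matrix with rows (0,1), (d,1), (d,2). Then A is image partition regular over S, but there do not exist k ∈ ℕ and a k × 3 rational matrix B such that {A x : x ∈ (S \ {0})²} ∩ (S \ {0})³ ⊆ {y ∈ (S \ {0})³ : B y = 0} ⊆ {A x : x ∈ S²} ∩ (S \ {0})³. -/

import Mathlib

/-!
Image partition regularity: colour `n : ℕ+` by the colour of `d * n` and apply Hindman's theorem
to get `a < b` with `a`, `b`, `a + b` monochromatic. Then `x = (b - a, d a)` has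
`A x = (d a, d b, d (a + b))`.

No kernel description: `B` must annihilate `A (1, 1) = (1, d + 1, d + 2)` and
`A (2, 1) = (1, 2d + 1, 2d + 2)`, hence also `(2d - 1) A (1, 1) + (1 - d) A (2, 1) = d (1, 2, 3)`.
But `(1, 2, 3) = A x` forces `x = (1/d, 1)`, and `1/d ∉ S`.
-/

open scoped BigOperators

open scoped Matrix

noncomputable def mulVecQ {u v : Type} (A : u → v → ℚ) (x : v → ℚ) : u → ℚ :=
  fun i => ∑ᶠ j, A i j * x j

def IPRQ {u v : Type} (A : u → v → ℚ) (S : Set ℚ) : Prop :=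
  ∀ (k : ℕ) (φ : ℚ → Fin k), ∃ x : v → ℚ,
    (∀ j, x j ∈ S \ {0}) ∧ (∀ i, mulVecQ A x i ∈ S \ {0}) ∧
    (∀ i i', φ (mulVecQ A x i) = φ (mulVecQ A x i'))

lemma mulVecQ_eq_mulVec {u v : Type} [Fintype v] (A : u → v → ℚ) (x : v → ℚ) :
    mulVecQ A x = Matrix.of A *ᵥ x := by
  ext i
  simp [mulVecQ, finsum_eq_sum_of_fintype, Matrix.mulVec, dotProduct]

lemma mulVecQ_rows (d : ℚ) (x : Fin 2 → ℚ) :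
    mulVecQ ![![0, 1], ![d, 1], ![d, 2]] x = ![x 1, d * x 0 + x 1, d * x 0 + 2 * x 1] := by
  ext i
  fin_cases i <;> simp [mulVecQ_eq_mulVec, Matrix.mulVec, dotProduct, Fin.sum_univ_two]

lemma AddSubsemigroup.natCast_mem_of_one_mem {M : Type*} [AddMonoidWithOne M]
    (S : AddSubsemigroup M) (hone : (1 : M) ∈ S) {n : ℕ} (hn : n ≠ 0) : (n : M) ∈ S := by
  induction n with
  | zero => exact absurd rfl hn
  | succ n ih =>
    rcases eq_or_ne n 0 with rfl | hn'
    · simpa using hone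
    · exact_mod_cast S.add_mem (ih hn') hone

lemma Hindman.exists_le_mem_FS (m : ℕ) (a : Stream' ℕ+) : ∃ b ∈ FS a, m ≤ (b : ℕ) := by
  induction m generalizing a with
  | zero => exact ⟨a.head, FS.head a, Nat.zero_le _⟩
  | succ m ih =>
    obtain ⟨b, hb, hmb⟩ := ih a.tail
    exact ⟨a.head + b, FS.cons a b hb, by simp only [PNat.add_coe]; have := a.head.pos; omega⟩

lemma PNat.exists_lt_monochromatic_add {κ : Type*} [Finite κ] (c : ℕ+ → κ) :
    ∃ a b : ℕ+, a < b ∧ c b = c a ∧ c (a + b) = c a := by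
  obtain ⟨_, ⟨i, rfl⟩, x, hx⟩ := Hindman.exists_FS_of_finite_cover
    (Set.range fun i => c ⁻¹' {i}) (Set.finite_range _)
    (fun n _ => Set.mem_sUnion.mpr ⟨_, ⟨c n, rfl⟩, rfl⟩)
  obtain ⟨b, hb, hab⟩ := Hindman.exists_le_mem_FS (x.head + 1) x.tail
  have ha : c x.head = i := hx (Hindman.FS.head x)
  refine ⟨x.head, b, PNat.coe_lt_coe _ _ |>.mp (by omega), ?_, ?_⟩
  · rw [ha]; exact hx (Hindman.FS.tail x b hb)
  · rw [ha]; exact hx (Hindman.FS.cons x b hb)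

lemma mulVecQ_one_two_three_eq_zero {k : ℕ} (B : Fin k → Fin 3 → ℚ) {d : ℚ} (hd : d ≠ 0)
    (h₁ : mulVecQ B ![1, d + 1, d + 2] = 0) (h₂ : mulVecQ B ![1, 2 * d + 1, 2 * d + 2] = 0) :
    mulVecQ B ![1, 2, 3] = 0 := by
  have hcomb : (![1, 2, 3] : Fin 3 → ℚ) =
      d⁻¹ • ((2 * d - 1) • ![1, d + 1, d + 2] + (1 - d) • ![1, 2 * d + 1, 2 * d + 2]) := by
    ext i; fin_cases i <;> simp <;> field_simp <;> ring
  rw [mulVecQ_eq_mulVec] at *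
  rw [hcomb, Matrix.mulVec_smul, Matrix.mulVec_add, Matrix.mulVec_smul, Matrix.mulVec_smul, h₁, h₂]
  simp

lemma eq_one_div_of_mulVecQ_rows_eq {d : ℚ} (hd : d ≠ 0) {x : Fin 2 → ℚ}
    (h : mulVecQ ![![0, 1], ![d, 1], ![d, 2]] x = ![1, 2, 3]) : x 0 = 1 / d := by
  rw [mulVecQ_rows] at h
  have h₀ := congrFun h 0
  have h₁ := congrFun h 1
  simp only [Matrix.cons_val_zero, Matrix.cons_val_one] at h₀ h₁
  field_simp
  linarith

section

variable (S : AddSubsemigroup ℚ) (hone : (1 : ℚ) ∈ S)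
include hone

lemma natCast_mem_diff_zero {n : ℕ} (hn : n ≠ 0) : (n : ℚ) ∈ (S : Set ℚ) \ {0} :=
  ⟨S.natCast_mem_of_one_mem hone hn, by simpa using hn⟩

lemma iprq_rows (d : ℕ+) : IPRQ ![![0, 1], ![((d : ℕ) : ℚ), 1], ![((d : ℕ) : ℚ), 2]] S := by
  intro k φ
  obtain ⟨a, b, hab, hb, hab'⟩ :=
    PNat.exists_lt_monochromatic_add fun n : ℕ+ => φ (((d * n : ℕ+) : ℕ) : ℚ)
  obtain ⟨m, rfl⟩ : ∃ m, b = a + m := ⟨b - a, (PNat.add_sub_of_lt hab).symm⟩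
  set t : Fin 3 → ℕ+ := ![a, a + m, a + (a + m)]
  set x : Fin 2 → ℚ := ![((m : ℕ) : ℚ), (((d * a : ℕ+) : ℕ) : ℚ)]
  have hx : ∀ j, x j ∈ (S : Set ℚ) \ {0} := by
    intro j; fin_cases j <;> exact natCast_mem_diff_zero S hone (PNat.ne_zero _)
  have hAx : mulVecQ ![![0, 1], ![((d : ℕ) : ℚ), 1], ![((d : ℕ) : ℚ), 2]] x =
      fun i => (((d * t i : ℕ+) : ℕ) : ℚ) := by
    rw [mulVecQ_rows]
    ext i; fin_cases i <;> simp [t, x] <;> ring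
  refine ⟨x, hx, fun i => hAx ▸ natCast_mem_diff_zero S hone (PNat.ne_zero _), ?_⟩
  have hcol : ∀ i, φ (((d * t i : ℕ+) : ℕ) : ℚ) = φ (((d * a : ℕ+) : ℕ) : ℚ) := by
    intro i; fin_cases i
    exacts [rfl, hb, hab']
  intro i i'
  rw [hAx, hcol, hcol]

lemma mulVecQ_one_two_three_eq_zero_of_annihilates {d : ℕ} (hd : d ≠ 0) {k : ℕ}
    (B : Fin k → Fin 3 → ℚ) (hB : ∀ x : Fin 2 → ℚ, (∀ j, x j ∈ (S : Set ℚ) \ {0}) →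
      (∀ i, mulVecQ ![![0, 1], ![(d : ℚ), 1], ![(d : ℚ), 2]] x i ∈ (S : Set ℚ) \ {0}) →
      mulVecQ B (mulVecQ ![![0, 1], ![(d : ℚ), 1], ![(d : ℚ), 2]] x) = 0) :
    mulVecQ B ![1, 2, 3] = 0 := by
  have hmem : ∀ {n : ℕ}, n ≠ 0 → (n : ℚ) ∈ (S : Set ℚ) \ {0} := natCast_mem_diff_zero S hone
  have hB' : ∀ p q : ℕ, p ≠ 0 → q ≠ 0 →
      mulVecQ B ![(q : ℚ), ((d * p + q : ℕ) : ℚ), ((d * p + 2 * q : ℕ) : ℚ)] = 0 := by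
    intro p q hp hq
    have hA : mulVecQ ![![0, 1], ![(d : ℚ), 1], ![(d : ℚ), 2]] ![(p : ℚ), (q : ℚ)] =
        ![(q : ℚ), ((d * p + q : ℕ) : ℚ), ((d * p + 2 * q : ℕ) : ℚ)] := by
      rw [mulVecQ_rows]; push_cast; rfl
    rw [← hA]
    refine hB _ (fun j => ?_) (fun i => ?_)
    · fin_cases j
      exacts [hmem hp, hmem hq]
    · rw [hA]; fin_cases i
      exacts [hmem hq, hmem (by positivity), hmem (by positivity)]
  refine mulVecQ_one_two_three_eq_zero B (Nat.cast_ne_zero.mpr hd) ?_ ?_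
  · convert hB' 1 1 one_ne_zero one_ne_zero using 2
    ext i; fin_cases i <;> simp
  · convert hB' 2 1 two_ne_zero one_ne_zero using 2
    ext i; fin_cases i <;> simp <;> ring

lemma one_two_three_mem (i : Fin 3) : (![1, 2, 3] : Fin 3 → ℚ) i ∈ (S : Set ℚ) \ {0} := by
  fin_cases i
  exacts [by simpa using natCast_mem_diff_zero S hone one_ne_zero,
    by simpa using natCast_mem_diff_zero S hone two_ne_zero,
    by simpa using natCast_mem_diff_zero S hone three_ne_zero]

end

theorem stmt10_general (S : AddSubsemigroup ℚ)
    (hone : (1 : ℚ) ∈ S)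
    (d : ℕ) (hdpos : 0 < d) (hd : (1 / (d : ℚ)) ∉ S)
    (A : Fin 3 → Fin 2 → ℚ)
    (hAdef : A = ![![0, 1], ![(d : ℚ), 1], ![(d : ℚ), 2]]) :
    IPRQ A (S : Set ℚ) ∧
    ¬ ∃ (k : ℕ) (B : Fin k → Fin 3 → ℚ),
        ({y : Fin 3 → ℚ | ∃ x : Fin 2 → ℚ, (∀ j, x j ∈ (S : Set ℚ) \ {0}) ∧ y = mulVecQ A x} ∩
            {y : Fin 3 → ℚ | ∀ i, y i ∈ (S : Set ℚ) \ {0}} ⊆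
          {y : Fin 3 → ℚ | (∀ i, y i ∈ (S : Set ℚ) \ {0}) ∧ ∀ l, mulVecQ B y l = 0}) ∧
        ({y : Fin 3 → ℚ | (∀ i, y i ∈ (S : Set ℚ) \ {0}) ∧ ∀ l, mulVecQ B y l = 0} ⊆
          {y : Fin 3 → ℚ | ∃ x : Fin 2 → ℚ, (∀ j, x j ∈ (S : Set ℚ)) ∧ y = mulVecQ A x} ∩
            {y : Fin 3 → ℚ | ∀ i, y i ∈ (S : Set ℚ) \ {0}}) := by
  subst hAdef
  refine ⟨iprq_rows S hone ⟨d, hdpos⟩, ?_⟩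
  rintro ⟨k, B, hsub, hsup⟩
  have hz := mulVecQ_one_two_three_eq_zero_of_annihilates S hone hdpos.ne' B
    fun x hx hAx => funext (hsub ⟨⟨x, hx, rfl⟩, hAx⟩).2
  obtain ⟨⟨x, hxS, hx⟩, -⟩ := hsup ⟨one_two_three_mem S hone, congrFun hz⟩
  exact hd (eq_one_div_of_mulVecQ_rows_eq (Nat.cast_ne_zero.mpr hdpos.ne') hx.symm ▸ hxS 0)

/-- let `S` be a nontrivial proper subsemigroup of the positive
rationals with `1 ∈ S`, and pick `d ∈ ℕ` with `1/d ∉ S`. Let `A` be the `3 × 2` matrix with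
rows `(0,1), (d,1), (d,2)`. Then `A` is image partition regular over `S`, but
there are no `k ∈ ℕ` and `k × 3` rational matrix `B` with
`{A x : x ∈ (S\{0})²} ∩ (S\{0})³ ⊆ {y ∈ (S\{0})³ : B y = 0} ⊆ {A x : x ∈ S²} ∩ (S\{0})³`. -/
theorem stmt10 (S : AddSubsemigroup ℚ) (hpos : ∀ s ∈ S, (0 : ℚ) < s)
    (hne : ∃ s, s ∈ S) (hproper : (S : Set ℚ) ≠ {q : ℚ | 0 < q})
    (hone : (1 : ℚ) ∈ S)
    (d : ℕ) (hdpos : 0 < d) (hd : (1 / (d : ℚ)) ∉ S)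
    (A : Fin 3 → Fin 2 → ℚ)
    (hAdef : A = ![![0, 1], ![(d : ℚ), 1], ![(d : ℚ), 2]]) :
    IPRQ A (S : Set ℚ) ∧
    ¬ ∃ (k : ℕ) (B : Fin k → Fin 3 → ℚ),
        ({y : Fin 3 → ℚ | ∃ x : Fin 2 → ℚ, (∀ j, x j ∈ (S : Set ℚ) \ {0}) ∧ y = mulVecQ A x} ∩
            {y : Fin 3 → ℚ | ∀ i, y i ∈ (S : Set ℚ) \ {0}} ⊆
          {y : Fin 3 → ℚ | (∀ i, y i ∈ (S : Set ℚ) \ {0}) ∧ ∀ l, mulVecQ B y l = 0}) ∧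
        ({y : Fin 3 → ℚ | (∀ i, y i ∈ (S : Set ℚ) \ {0}) ∧ ∀ l, mulVecQ B y l = 0} ⊆
          {y : Fin 3 → ℚ | ∃ x : Fin 2 → ℚ, (∀ j, x j ∈ (S : Set ℚ)) ∧ y = mulVecQ A x} ∩
            {y : Fin 3 → ℚ | ∀ i, y i ∈ (S : Set ℚ) \ {0}}) :=
  stmt10_general S hone d hdpos hd A hAdef
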